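/- arXiv:1311.7575 — 2 statements merged into one kernel-verified Lean document; each statement's English description precedes it below -/
import Mathlib

section
/- Let X, Y, Z be pointed metric spaces, let 0 < p ≤ s ≤ ∞ and p ≥ r > 0. If S : X → Y is Lipschitz (m^L(s;p),r)-summing and T : Y → Z is Lipschitz (s,m^L(s;s))-summing, then T ∘ S : X → Z is Lipschitz (p,m^L(r;r))-summing and π^L_{(p,m^L(r;r))}(T ∘ S) ≤ π^L_{(s,m^L(s;s))}(T) · π^L_{(m^L(s;p),r)}(S). -/
open MeasureTheory ENNReal NNReal

noncomputable section

/-- The closed unit ball `B_{X^#}` of the Lipschitz dual of a pointed metric space `(X, x₀)`: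
all Lipschitz functions `f : X → ℝ` with `f x₀ = 0` and Lipschitz constant at most `1`. -/
def dualBall (X : Type*) [MetricSpace X] (x₀ : X) : Set (X → ℝ) :=
  {f | LipschitzWith 1 f ∧ f x₀ = 0}

/-- The strong `ℓ_p` norm `‖(σ,x',x'')|ℓ_p‖ = (Σ_j |σ_j|^p d(x'_j,x''_j)^p)^{1/p}`
(with the sup for `p = ∞`). -/
def strongNorm {X : Type*} [MetricSpace X] (p : ℝ≥0∞) {m : ℕ}
    (σ : Fin m → ℝ) (x' x'' : Fin m → X) : ℝ≥0∞ :=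
  eLpNorm (fun j => σ j * dist (x' j) (x'' j)) p Measure.count

/-- The weak Lipschitz `ℓ_p` norm
`‖(σ,x',x'')|ℓ_p^{L,w}‖ = sup_{f ∈ B_{X^#}} (Σ_j |σ_j|^p |f(x'_j) - f(x''_j)|^p)^{1/p}`. -/
def weakNorm {X : Type*} [MetricSpace X] (x₀ : X) (p : ℝ≥0∞) {m : ℕ}
    (σ : Fin m → ℝ) (x' x'' : Fin m → X) : ℝ≥0∞ :=
  ⨆ f ∈ dualBall X x₀, eLpNorm (fun j => σ j * (f (x' j) - f (x'' j))) p Measure.count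

/-- The `q`-conjugate index `s'(q)`, determined by `1/s'(q) = 1/q - 1/s`. -/
def conjIdx (q s : ℝ≥0∞) : ℝ≥0∞ := (1 / q - 1 / s)⁻¹

/-- The Lipschitz mixed `(s;q)`-norm
`m^L_{(s;q)}(σ,x',x'') = inf ‖τ|ℓ_{s'(q)}‖ ⬝ ‖(σ/τ,x',x'')|ℓ_s^{L,w}‖`,
the infimum over all finite sequences `τ` of nonzero reals. -/
def mixedNorm {X : Type*} [MetricSpace X] (x₀ : X) (s q : ℝ≥0∞) {m : ℕ}
    (σ : Fin m → ℝ) (x' x'' : Fin m → X) : ℝ≥0∞ :=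
  ⨅ (τ : Fin m → ℝ) (_ : ∀ j, τ j ≠ 0),
    eLpNorm τ (conjIdx q s) Measure.count * weakNorm x₀ s (fun j => σ j / τ j) x' x''

/-- `T` is Lipschitz `(m^L(s;q),p)`-summing:
`m^L_{(s;q)}(σ,Tx',Tx'') ≤ C ⬝ ‖(σ,x',x'')|ℓ_p^{L,w}‖` for all finite sequences. -/
def LipMixedP {X Y : Type*} [MetricSpace X] [MetricSpace Y] (x₀ : X) (y₀ : Y)
    (s q p : ℝ≥0∞) (T : X → Y) : Prop :=
  ∃ C : ℝ≥0, ∀ (m : ℕ) (σ : Fin m → ℝ) (x' x'' : Fin m → X),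
    mixedNorm y₀ s q σ (T ∘ x') (T ∘ x'') ≤ C * weakNorm x₀ p σ x' x''

/-- The norm `π^L_{(m^L(s;q),p)}(T)`, the least constant in the defining inequality. -/
def lipMixedPNorm {X Y : Type*} [MetricSpace X] [MetricSpace Y] (x₀ : X) (y₀ : Y)
    (s q p : ℝ≥0∞) (T : X → Y) : ℝ≥0∞ :=
  sInf {C : ℝ≥0∞ | ∀ (m : ℕ) (σ : Fin m → ℝ) (x' x'' : Fin m → X),
    mixedNorm y₀ s q σ (T ∘ x') (T ∘ x'') ≤ C * weakNorm x₀ p σ x' x''}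

/-- `T` is Lipschitz `(p,m^L(s;q))`-summing:
`‖(σ,Tx',Tx'')|ℓ_p‖ ≤ C ⬝ m^L_{(s;q)}(σ,x',x'')` for all finite sequences. -/
def LipPMixed {X Y : Type*} [MetricSpace X] [MetricSpace Y] (x₀ : X)
    (p s q : ℝ≥0∞) (T : X → Y) : Prop :=
  ∃ C : ℝ≥0, ∀ (m : ℕ) (σ : Fin m → ℝ) (x' x'' : Fin m → X),
    strongNorm p σ (T ∘ x') (T ∘ x'') ≤ C * mixedNorm x₀ s q σ x' x''

/-- The norm `π^L_{(p,m^L(s;q))}(T)`, the least constant in the defining inequality. -/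
def lipPMixedNorm {X Y : Type*} [MetricSpace X] [MetricSpace Y] (x₀ : X)
    (p s q : ℝ≥0∞) (T : X → Y) : ℝ≥0∞ :=
  sInf {C : ℝ≥0∞ | ∀ (m : ℕ) (σ : Fin m → ℝ) (x' x'' : Fin m → X),
    strongNorm p σ (T ∘ x') (T ∘ x'') ≤ C * mixedNorm x₀ s q σ x' x''}

/-- The Lipschitz constant of a map, as an element of `ℝ≥0∞` (equal to `∞` if the map is
not Lipschitz). -/
def lipConst {α β : Type*} [PseudoEMetricSpace α] [PseudoEMetricSpace β] (f : α → β) : ℝ≥0∞ :=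
  ⨅ (K : ℝ≥0) (_ : LipschitzWith K f), (K : ℝ≥0∞)

/-!
If `T` is Lipschitz `(s, m^L(s;s))`-summing, then Hölder's inequality with exponents
`1/p = 1/s'(p) + 1/s` gives, for every nonzero weight `τ`,
`‖(σ, Ty', Ty'')|ℓ_p‖ ≤ ‖τ|ℓ_{s'(p)}‖ ⬝ ‖(σ/τ, Ty', Ty'')|ℓ_s‖
  ≤ π(T) ⬝ ‖τ|ℓ_{s'(p)}‖ ⬝ ‖(σ/τ, y', y'')|ℓ_s^{L,w}‖`,
because `m^L_{(s;s)}` is the weak `ℓ_s` norm. Taking the infimum over `τ`, `T` is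
`(p, m^L(s;p))`-summing with the same constant. Composing with `S` and using once more that the
weak `ℓ_r` norm is `m^L_{(r;r)}` gives the claim.
-/

def LipPMixedBound {X Y : Type*} [MetricSpace X] [MetricSpace Y] (x₀ : X)
    (p s q : ℝ≥0∞) (T : X → Y) (C : ℝ≥0∞) : Prop :=
  ∀ (m : ℕ) (σ : Fin m → ℝ) (x' x'' : Fin m → X),
    strongNorm p σ (T ∘ x') (T ∘ x'') ≤ C * mixedNorm x₀ s q σ x' x''

def LipMixedPBound {X Y : Type*} [MetricSpace X] [MetricSpace Y] (x₀ : X) (y₀ : Y)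
    (s q p : ℝ≥0∞) (T : X → Y) (C : ℝ≥0∞) : Prop :=
  ∀ (m : ℕ) (σ : Fin m → ℝ) (x' x'' : Fin m → X),
    mixedNorm y₀ s q σ (T ∘ x') (T ∘ x'') ≤ C * weakNorm x₀ p σ x' x''

lemma holderTriple_conjIdx {p s : ℝ≥0∞} (hps : p ≤ s) : HolderTriple (conjIdx p s) s p where
  inv_add_inv_eq_inv := by
    simp only [conjIdx, one_div, inv_inv]
    exact tsub_add_cancel_of_le (ENNReal.inv_le_inv' hps)

lemma conjIdx_self (s : ℝ≥0∞) : conjIdx s s = ∞ := by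
  simp [conjIdx]

lemma ENNReal.le_sInf_mul_sInf {A B : Set ℝ≥0∞} {x : ℝ≥0∞} (hA : ∃ a ∈ A, a ≠ ∞)
    (hB : ∃ b ∈ B, b ≠ ∞) (h : ∀ a ∈ A, a ≠ ∞ → ∀ b ∈ B, x ≤ a * b) : x ≤ sInf A * sInf B := by
  obtain ⟨a, haA, ha⟩ := hA
  obtain ⟨b, hbB, hb⟩ := hB
  rw [← sInf_sdiff_singleton_top A, sInf_eq_iInf', sInf_eq_iInf']
  exact ENNReal.le_iInf_mul_iInf ⟨⟨a, haA, ha⟩, ha⟩ ⟨⟨b, hbB⟩, hb⟩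
    fun a' b' => h a' a'.2.1 a'.2.2 b' b'.2

lemma eLpNorm_mul_le_eLpNorm_mul_eLpNorm_div {ι : Type*} [MeasurableSpace ι]
    [DiscreteMeasurableSpace ι] (μ : Measure ι) {p q r : ℝ≥0∞} [HolderTriple p q r]
    {τ : ι → ℝ} (hτ : ∀ j, τ j ≠ 0) (σ g : ι → ℝ) :
    eLpNorm (fun j => σ j * g j) r μ
      ≤ eLpNorm τ p μ * eLpNorm (fun j => σ j / τ j * g j) q μ := by
  have hσ : (fun j => σ j * g j) = τ • fun j => σ j / τ j * g j := by
    funext j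
    show σ j * g j = τ j * (σ j / τ j * g j)
    rw [← mul_assoc, mul_div_cancel₀ _ (hτ j)]
  rw [hσ]
  exact eLpNorm_smul_le_mul_eLpNorm Measurable.of_discrete.aestronglyMeasurable
    Measurable.of_discrete.aestronglyMeasurable

section Norms

variable {X : Type*} [MetricSpace X] (x₀ : X) {m : ℕ}

lemma weakNorm_le_eLpNorm_mul_weakNorm_div {p q r : ℝ≥0∞} [HolderTriple p q r]
    {τ : Fin m → ℝ} (hτ : ∀ j, τ j ≠ 0) (σ : Fin m → ℝ) (x' x'' : Fin m → X) :
    weakNorm x₀ r σ x' x''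
      ≤ eLpNorm τ p Measure.count * weakNorm x₀ q (fun j => σ j / τ j) x' x'' :=
  iSup₂_le fun f hf =>
    (eLpNorm_mul_le_eLpNorm_mul_eLpNorm_div _ hτ σ _).trans <| by
      gcongr
      exact le_iSup₂ (f := fun g (_ : g ∈ dualBall X x₀) =>
        eLpNorm (fun j => σ j / τ j * (g (x' j) - g (x'' j))) q Measure.count) f hf

lemma mixedNorm_self (s : ℝ≥0∞) (σ : Fin m → ℝ) (x' x'' : Fin m → X) :
    mixedNorm x₀ s s σ x' x'' = weakNorm x₀ s σ x' x'' := by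
  refine le_antisymm ((iInf₂_le (fun _ => (1 : ℝ)) fun _ => one_ne_zero).trans ?_)
    (le_iInf₂ fun τ hτ => ?_)
  · have hone : eLpNorm (fun _ : Fin m => (1 : ℝ)) ∞ Measure.count ≤ 1 := by simp
    rw [conjIdx_self]
    simpa using mul_le_mul_left hone (weakNorm x₀ s σ x' x'')
  · rw [conjIdx_self]
    exact weakNorm_le_eLpNorm_mul_weakNorm_div x₀ hτ σ x' x''

end Norms

section Summing

variable {X Y Z : Type*} [MetricSpace X] [MetricSpace Y] [MetricSpace Z]

lemma LipPMixedBound.of_le {y₀ : Y} {p s : ℝ≥0∞} {T : Y → Z} {a : ℝ≥0∞}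
    (hT : LipPMixedBound y₀ s s s T a) (hps : p ≤ s) (ha : a ≠ ∞) :
    LipPMixedBound y₀ p s p T a := by
  intro m σ y' y''
  have := holderTriple_conjIdx hps
  have hτ_bound : ∀ τ : Fin m → ℝ, (∀ j, τ j ≠ 0) →
      strongNorm p σ (T ∘ y') (T ∘ y'') ≤ a * (eLpNorm τ (conjIdx p s) Measure.count *
        weakNorm y₀ s (fun j => σ j / τ j) y' y'') := fun τ hτ =>
    calc strongNorm p σ (T ∘ y') (T ∘ y'')
        ≤ eLpNorm τ (conjIdx p s) Measure.count *
            strongNorm s (fun j => σ j / τ j) (T ∘ y') (T ∘ y'') :=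
          eLpNorm_mul_le_eLpNorm_mul_eLpNorm_div _ hτ σ _
      _ ≤ eLpNorm τ (conjIdx p s) Measure.count *
            (a * weakNorm y₀ s (fun j => σ j / τ j) y' y'') := by
          rw [← mixedNorm_self]
          gcongr
          exact hT m _ y' y''
      _ = a * (eLpNorm τ (conjIdx p s) Measure.count *
            weakNorm y₀ s (fun j => σ j / τ j) y' y'') := mul_left_comm _ _ _
  rcases eq_or_ne a 0 with rfl | ha₀
  · simpa using hτ_bound (fun _ => 1) fun _ => one_ne_zero
  · simp only [mixedNorm, ENNReal.mul_iInf_of_ne ha₀ ha]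
    exact le_iInf₂ hτ_bound

lemma LipPMixedBound.comp {x₀ : X} {y₀ : Y} {p s r : ℝ≥0∞} {S : X → Y} {T : Y → Z}
    {a b : ℝ≥0∞} (hT : LipPMixedBound y₀ p s p T a) (hS : LipMixedPBound x₀ y₀ s p r S b) :
    LipPMixedBound x₀ p r r (T ∘ S) (a * b) := fun m σ x' x'' =>
  calc strongNorm p σ (T ∘ (S ∘ x')) (T ∘ (S ∘ x''))
      ≤ a * mixedNorm y₀ s p σ (S ∘ x') (S ∘ x'') := hT m σ _ _
    _ ≤ a * (b * mixedNorm x₀ r r σ x' x'') := by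
        rw [mixedNorm_self]
        gcongr
        exact hS m σ x' x''
    _ = a * b * mixedNorm x₀ r r σ x' x'' := (mul_assoc _ _ _).symm

end Summing

theorem stmt2_general {X Y Z : Type*} [MetricSpace X] [MetricSpace Y] [MetricSpace Z]
    (x₀ : X) (y₀ : Y) (p s r : ℝ≥0∞)
    (hps : p ≤ s)
    (S : X → Y) (T : Y → Z)
    (hSsum : LipMixedP x₀ y₀ s p r S) (hTsum : LipPMixed y₀ s s s T) :
    LipPMixed x₀ p r r (T ∘ S) ∧
    lipPMixedNorm x₀ p r r (T ∘ S) ≤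
      lipPMixedNorm y₀ s s s T * lipMixedPNorm x₀ y₀ s p r S := by
  obtain ⟨CT, hCT⟩ := hTsum
  obtain ⟨CS, hCS⟩ := hSsum
  have hcomp : ∀ a b : ℝ≥0∞, LipPMixedBound y₀ s s s T a → a ≠ ∞ →
      LipMixedPBound x₀ y₀ s p r S b → LipPMixedBound x₀ p r r (T ∘ S) (a * b) :=
    fun a b hT ha hS => (hT.of_le hps ha).comp hS
  refine ⟨⟨CT * CS, by exact_mod_cast hcomp _ _ hCT coe_ne_top hCS⟩, ?_⟩
  exact ENNReal.le_sInf_mul_sInf ⟨CT, hCT, coe_ne_top⟩ ⟨CS, hCS, coe_ne_top⟩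
    fun a hT ha b hS => sInf_le (hcomp a b hT ha hS)

/-- if `0 < p ≤ s ≤ ∞`, `0 < r ≤ p`, `S : X → Y` is Lipschitz
`(m^L(s;p),r)`-summing and `T : Y → Z` is Lipschitz `(s,m^L(s;s))`-summing, then
`T ∘ S` is Lipschitz `(p,m^L(r;r))`-summing with
`π^L_{(p,m^L(r;r))}(T ∘ S) ≤ π^L_{(s,m^L(s;s))}(T) ⬝ π^L_{(m^L(s;p),r)}(S)`. -/
theorem stmt2 {X Y Z : Type*} [MetricSpace X] [MetricSpace Y] [MetricSpace Z]
    (x₀ : X) (y₀ : Y) (z₀ : Z) (p s r : ℝ≥0∞)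
    (hp : 0 < p) (hps : p ≤ s) (hr : 0 < r) (hrp : r ≤ p)
    (S : X → Y) (T : Y → Z) (KS KT : ℝ≥0)
    (hS : LipschitzWith KS S) (hT : LipschitzWith KT T)
    (hSsum : LipMixedP x₀ y₀ s p r S) (hTsum : LipPMixed y₀ s s s T) :
    LipPMixed x₀ p r r (T ∘ S) ∧
    lipPMixedNorm x₀ p r r (T ∘ S) ≤
      lipPMixedNorm y₀ s s s T * lipMixedPNorm x₀ y₀ s p r S :=
  stmt2_general x₀ y₀ p s r hps S T hSsum hTsum
end
end

section
/- Let X, Y, Z be pointed metric spaces, 0 < q ≤ s ≤ ∞, q ≥ r > 0 and p ≥ q. If S : X → Y is Lipschitz (m^L(s;q),r)-summing and T : Y → Z is Lipschitz (p,m^L(s;q))-summing, then T ∘ S : X → Z is Lipschitz (p,m^L(r;r))-summing and π^L_{(p,m^L(r;r))}(T ∘ S) ≤ π^L_{(p,m^L(s;q))}(T) · π^L_{(m^L(s;q),r)}(S). -/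
open MeasureTheory ENNReal NNReal

noncomputable section

lemma count_ae_all {m : ℕ} {P : Fin m → Prop}
    (h : ∀ᵐ j ∂(Measure.count : Measure (Fin m)), P j) : ∀ j, P j := by
  have h2 : (Measure.count : Measure (Fin m)) {j | ¬ P j} = 0 := ae_iff.mp h
  intro j
  by_contra hj
  have : ({j | ¬ P j} : Set (Fin m)) = ∅ := Measure.count_eq_zero_iff.mp h2
  exact absurd (this ▸ hj : j ∈ (∅ : Set (Fin m))) (Set.notMem_empty j)

lemma nnnorm_le_eLpNorm_top {m : ℕ} (τ : Fin m → ℝ) (j : Fin m) :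
    (‖τ j‖₊ : ℝ≥0∞) ≤ eLpNorm τ ∞ Measure.count := by
  rw [eLpNorm_exponent_top]
  exact count_ae_all (ae_le_eLpNormEssSup (f := τ)) j

lemma eLpNorm_count_lt_top {m : ℕ} (f : Fin m → ℝ) (p : ℝ≥0∞) :
    eLpNorm f p (Measure.count : Measure (Fin m)) < ∞ := by
  have hb : ∀ᵐ j ∂(Measure.count : Measure (Fin m)), ‖f j‖ ≤ ∑ i, ‖f i‖ :=
    ae_of_all _ fun j => Finset.single_le_sum (fun i _ => norm_nonneg (f i)) (Finset.mem_univ j)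
  refine (eLpNorm_le_of_ae_bound hb).trans_lt ?_
  refine ENNReal.mul_lt_top ?_ ofReal_lt_top
  exact ENNReal.rpow_lt_top_of_nonneg (inv_nonneg.mpr ENNReal.toReal_nonneg)
    (by simp [Measure.count_apply_lt_top.mpr (Set.finite_univ)] : _ ≠ ∞)

lemma weakNorm_le_strongNorm {X : Type*} [MetricSpace X] (x₀ : X) (p : ℝ≥0∞) {m : ℕ}
    (σ : Fin m → ℝ) (x' x'' : Fin m → X) :
    weakNorm x₀ p σ x' x'' ≤ strongNorm p σ x' x'' := by
  refine iSup₂_le fun f hf => eLpNorm_mono fun j => ?_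
  rw [norm_mul, norm_mul]
  refine mul_le_mul_of_nonneg_left ?_ (norm_nonneg _)
  rw [Real.norm_eq_abs, ← Real.dist_eq, Real.norm_eq_abs, abs_of_nonneg dist_nonneg]
  simpa using hf.1.dist_le_mul (x' j) (x'' j)

lemma weakNorm_ne_top {X : Type*} [MetricSpace X] (x₀ : X) (p : ℝ≥0∞) {m : ℕ}
    (σ : Fin m → ℝ) (x' x'' : Fin m → X) : weakNorm x₀ p σ x' x'' ≠ ∞ :=
  ((weakNorm_le_strongNorm x₀ p σ x' x'').trans_lt (eLpNorm_count_lt_top _ _)).ne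

lemma mixedNorm_ne_top {X : Type*} [MetricSpace X] (x₀ : X) (s q : ℝ≥0∞) {m : ℕ}
    (σ : Fin m → ℝ) (x' x'' : Fin m → X) : mixedNorm x₀ s q σ x' x'' ≠ ∞ := by
  refine ne_top_of_le_ne_top ?_
    (iInf₂_le (fun _ => (1:ℝ)) (fun j => one_ne_zero) : mixedNorm x₀ s q σ x' x'' ≤ _)
  exact (ENNReal.mul_lt_top (eLpNorm_count_lt_top _ _)
    ((weakNorm_le_strongNorm x₀ s _ x' x'').trans_lt (eLpNorm_count_lt_top _ _))).ne

lemma weakNorm_le_mixedNorm {X : Type*} [MetricSpace X] (x₀ : X) (r : ℝ≥0∞) {m : ℕ}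
    (σ : Fin m → ℝ) (x' x'' : Fin m → X) :
    weakNorm x₀ r σ x' x'' ≤ mixedNorm x₀ r r σ x' x'' := by
  have hc : conjIdx r r = ∞ := by simp [conjIdx, tsub_self]
  refine le_iInf₂ fun τ hτ => ?_
  rw [hc]
  refine iSup₂_le fun f hf => ?_
  set c : ℝ≥0 := Finset.univ.sup fun j => ‖τ j‖₊ with hcdef
  have step1 : eLpNorm (fun j => σ j * (f (x' j) - f (x'' j))) r Measure.count ≤
      c * eLpNorm (fun j => σ j / τ j * (f (x' j) - f (x'' j))) r Measure.count := by
    have hmono : ∀ j, ‖σ j * (f (x' j) - f (x'' j))‖ ≤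
        ‖((c : ℝ) • fun i => σ i / τ i * (f (x' i) - f (x'' i))) j‖ := by
      intro j
      rw [Pi.smul_apply, norm_smul, Real.norm_eq_abs (c:ℝ), abs_of_nonneg c.coe_nonneg]
      have hσ : τ j * (σ j / τ j) = σ j := by
        rw [mul_comm]; exact div_mul_cancel₀ (σ j) (hτ j)
      calc ‖σ j * (f (x' j) - f (x'' j))‖
          = ‖τ j‖ * ‖σ j / τ j * (f (x' j) - f (x'' j))‖ := by
            rw [← norm_mul, ← mul_assoc, hσ]
        _ ≤ (c : ℝ) * ‖σ j / τ j * (f (x' j) - f (x'' j))‖ :=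
            mul_le_mul_of_nonneg_right
              (by exact_mod_cast Finset.le_sup (f := fun i => ‖τ i‖₊) (Finset.mem_univ j))
              (norm_nonneg _)
    calc eLpNorm (fun j => σ j * (f (x' j) - f (x'' j))) r Measure.count
        ≤ eLpNorm ((c : ℝ) • fun i => σ i / τ i * (f (x' i) - f (x'' i))) r Measure.count :=
          eLpNorm_mono hmono
      _ = (‖(c:ℝ)‖₊ : ℝ≥0∞) * _ := eLpNorm_const_smul _ _ _ _
      _ = c * _ := by norm_num
  refine step1.trans (mul_le_mul' ?_ ?_)
  · rw [hcdef, ENNReal.coe_finset_sup]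
    exact Finset.sup_le fun j _ => nnnorm_le_eLpNorm_top τ j
  · exact le_iSup₂_of_le f hf le_rfl

lemma sInf_mul_mem {A : Set ℝ≥0∞} (hA : A.Nonempty) {F G : ℝ≥0∞} (hG : G ≠ ∞)
    (h : ∀ C ∈ A, F ≤ C * G) : F ≤ sInf A * G := by
  have : Nonempty A := hA.to_subtype
  rw [sInf_eq_iInf', ENNReal.iInf_mul (by simp [hG])]
  exact le_iInf fun C => h C C.2


/-- if `0 < q ≤ s ≤ ∞`, `0 < r ≤ q ≤ p`, `S : X → Y` is Lipschitz
`(m^L(s;q),r)`-summing and `T : Y → Z` is Lipschitz `(p,m^L(s;q))`-summing, then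
`T ∘ S` is Lipschitz `(p,m^L(r;r))`-summing with
`π^L_{(p,m^L(r;r))}(T ∘ S) ≤ π^L_{(p,m^L(s;q))}(T) ⬝ π^L_{(m^L(s;q),r)}(S)`. -/
theorem stmt6 {X Y Z : Type*} [MetricSpace X] [MetricSpace Y] [MetricSpace Z]
    (x₀ : X) (y₀ : Y) (z₀ : Z) (p q s r : ℝ≥0∞)
    (hq : 0 < q) (hqs : q ≤ s) (hr : 0 < r) (hrq : r ≤ q) (hqp : q ≤ p)
    (S : X → Y) (T : Y → Z) (KS KT : ℝ≥0)
    (hS : LipschitzWith KS S) (hT : LipschitzWith KT T)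
    (hSsum : LipMixedP x₀ y₀ s q r S) (hTsum : LipPMixed y₀ p s q T) :
    LipPMixed x₀ p r r (T ∘ S) ∧
    lipPMixedNorm x₀ p r r (T ∘ S) ≤
      lipPMixedNorm y₀ p s q T * lipMixedPNorm x₀ y₀ s q r S := by
  obtain ⟨CT, hCT⟩ := hTsum
  obtain ⟨CS, hCS⟩ := hSsum
  -- the general chain of inequalities
  have chain : ∀ (cT cS : ℝ≥0∞),
      (∀ (m : ℕ) (σ : Fin m → ℝ) (y' y'' : Fin m → Y),
        strongNorm p σ (T ∘ y') (T ∘ y'') ≤ cT * mixedNorm y₀ s q σ y' y'') →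
      (∀ (m : ℕ) (σ : Fin m → ℝ) (x' x'' : Fin m → X),
        mixedNorm y₀ s q σ (S ∘ x') (S ∘ x'') ≤ cS * weakNorm x₀ r σ x' x'') →
      ∀ (m : ℕ) (σ : Fin m → ℝ) (x' x'' : Fin m → X),
        strongNorm p σ ((T ∘ S) ∘ x') ((T ∘ S) ∘ x'') ≤
          cT * cS * mixedNorm x₀ r r σ x' x'' := by
    intro cT cS hT' hS' m σ x' x''
    calc strongNorm p σ ((T ∘ S) ∘ x') ((T ∘ S) ∘ x'')
        = strongNorm p σ (T ∘ (S ∘ x')) (T ∘ (S ∘ x'')) := rfl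
      _ ≤ cT * mixedNorm y₀ s q σ (S ∘ x') (S ∘ x'') := hT' m σ _ _
      _ ≤ cT * (cS * weakNorm x₀ r σ x' x'') := mul_le_mul_right (hS' m σ x' x'') _
      _ ≤ cT * (cS * mixedNorm x₀ r r σ x' x'') :=
          mul_le_mul_right (mul_le_mul_right (weakNorm_le_mixedNorm x₀ r σ x' x'') _) _
      _ = cT * cS * mixedNorm x₀ r r σ x' x'' := (mul_assoc _ _ _).symm
  constructor
  · exact ⟨CT * CS, fun m σ x' x'' => by
      simpa [ENNReal.coe_mul] using chain CT CS hCT hCS m σ x' x''⟩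
  · set πT := lipPMixedNorm y₀ p s q T with hπT
    set πS := lipMixedPNorm x₀ y₀ s q r S with hπS
    have hTmem : ∀ (m : ℕ) (σ : Fin m → ℝ) (y' y'' : Fin m → Y),
        strongNorm p σ (T ∘ y') (T ∘ y'') ≤ πT * mixedNorm y₀ s q σ y' y'' := by
      intro m σ y' y''
      refine sInf_mul_mem ⟨(CT : ℝ≥0∞), ?_⟩ (mixedNorm_ne_top y₀ s q σ y' y'')
        (fun C hC => hC m σ y' y'')
      exact hCT
    have hSmem : ∀ (m : ℕ) (σ : Fin m → ℝ) (x' x'' : Fin m → X),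
        mixedNorm y₀ s q σ (S ∘ x') (S ∘ x'') ≤ πS * weakNorm x₀ r σ x' x'' := by
      intro m σ x' x''
      refine sInf_mul_mem ⟨(CS : ℝ≥0∞), ?_⟩ (weakNorm_ne_top x₀ r σ x' x'')
        (fun C hC => hC m σ x' x'')
      exact hCS
    exact sInf_le (chain πT πS hTmem hSmem)
end
end
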